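/- arXiv:1901.05549 — 2 statements merged into one kernel-verified Lean document; each statement's English description precedes it below -/
import Mathlib

section
/- Let T be a finite tree with vertex set V, let X ⊆ V contain every leaf of T, and let {A, B} be a partition of X into two nonempty sets such that: (i) no edge of T induces the X-split {A, B}; and (ii) for every edge e of T, the X-split induced by e is compatible with {A, B}. Then there exists a unique vertex v ∈ V such that for every connected component W (given by its vertex set) of T with v deleted, either X ∩ W ⊆ A or X ∩ W ⊆ B. -/
/-!
Call a vertex set `S` monochromatic if `X ∩ S` lies in `A` or in `B`. Compatibility makes at
least one side of every edge monochromatic, and since no edge induces `{A, B}`, exactly one.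
Orienting each edge away from its monochromatic side, some vertex `w` has no outgoing edge,
because a tree has fewer edges than vertices. The components of `T - w` are exactly the sides
of the edges at `w` facing away from `w`, so such sinks are the vertices sought. Two sinks
`y ≠ w` are impossible: for the first edge `yu` on the path to `w`, the side of `u` is
monochromatic because `y` is a sink, and the side of `y` lies inside a side facing away from
`w`, so it is monochromatic too.
-/

open Set

section Splits

variable {α : Type*}

def IsMonochromatic (A B T : Set α) : Prop := T ⊆ A ∨ T ⊆ B

lemma IsMonochromatic.mono {A B S T : Set α} (hTS : T ⊆ S) (hS : IsMonochromatic A B S) :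
    IsMonochromatic A B T :=
  hS.imp hTS.trans hTS.trans

variable {X A B S S' : Set α}

lemma subset_of_inter_inter_eq_empty {C D : Set α} (hX : X ⊆ C ∪ D) (h : X ∩ S ∩ C = ∅) :
    X ∩ S ⊆ D :=
  Disjoint.left_le_of_le_sup_left (inter_subset_left.trans hX) (disjoint_iff_inter_eq_empty.2 h)

lemma isMonochromatic_or_of_compatible (hX : X ⊆ A ∪ B)
    (h : X ∩ S ∩ A = ∅ ∨ X ∩ S ∩ B = ∅ ∨ X ∩ S' ∩ A = ∅ ∨ X ∩ S' ∩ B = ∅) :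
    IsMonochromatic A B (X ∩ S) ∨ IsMonochromatic A B (X ∩ S') := by
  have hX' : X ⊆ B ∪ A := union_comm A B ▸ hX
  rcases h with h | h | h | h
  · exact .inl (.inr (subset_of_inter_inter_eq_empty hX h))
  · exact .inl (.inl (subset_of_inter_inter_eq_empty hX' h))
  · exact .inr (.inr (subset_of_inter_inter_eq_empty hX h))
  · exact .inr (.inl (subset_of_inter_inter_eq_empty hX' h))

lemma subset_of_inter_subset_of_inter_subset {C : Set α} (hS : S ∪ S' = univ)
    (h : X ∩ S ⊆ C) (h' : X ∩ S' ⊆ C) : X ⊆ C := by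
  rw [← inter_univ X, ← hS, inter_union_distrib_left]
  exact union_subset h h'

lemma eq_of_inter_subset_of_inter_subset {C D : Set α} (hCD : Disjoint C D) (hC : C ⊆ X)
    (hS : S ∪ S' = univ) (h : X ∩ S ⊆ C) (h' : X ∩ S' ⊆ D) : X ∩ S = C := by
  refine h.antisymm fun x hx => ⟨hC hx, ?_⟩
  refine (hS.symm ▸ mem_univ x : x ∈ S ∪ S').resolve_right fun hxS' => ?_
  exact hCD.notMem_of_mem_left hx (h' ⟨hC hx, hxS'⟩)

lemma not_isMonochromatic_and (hA : A.Nonempty) (hB : B.Nonempty) (hAB : Disjoint A B)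
    (hX : A ∪ B = X) (hS : S ∪ S' = univ)
    (hsplit : ¬((X ∩ S = A ∧ X ∩ S' = B) ∨ (X ∩ S = B ∧ X ∩ S' = A))) :
    ¬(IsMonochromatic A B (X ∩ S) ∧ IsMonochromatic A B (X ∩ S')) := by
  have hAX : A ⊆ X := hX ▸ subset_union_left
  have hBX : B ⊆ X := hX ▸ subset_union_right
  have hS' : S' ∪ S = univ := union_comm S S' ▸ hS
  rintro ⟨hSA | hSB, hS'A | hS'B⟩
  · obtain ⟨b, hb⟩ := hB
    exact hAB.notMem_of_mem_right hb (subset_of_inter_subset_of_inter_subset hS hSA hS'A (hBX hb))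
  · exact hsplit (.inl ⟨eq_of_inter_subset_of_inter_subset hAB hAX hS hSA hS'B,
      eq_of_inter_subset_of_inter_subset hAB.symm hBX hS' hS'B hSA⟩)
  · exact hsplit (.inr ⟨eq_of_inter_subset_of_inter_subset hAB.symm hBX hS hSB hS'A,
      eq_of_inter_subset_of_inter_subset hAB hAX hS' hS'A hSB⟩)
  · obtain ⟨a, ha⟩ := hA
    exact hAB.notMem_of_mem_left ha (subset_of_inter_subset_of_inter_subset hS hSB hS'B (hAX ha))

end Splits

namespace SimpleGraph

variable {V : Type*} {G : SimpleGraph V} {a b c d u v w x y : V}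

def side (G : SimpleGraph V) (u v : V) : Set V :=
  {x | (G.deleteEdges {s(u, v)}).Reachable u x}

lemma setOf_reachable_deleteEdges_eq_side :
    {x | (G.deleteEdges {s(u, v)}).Reachable v x} = G.side v u := by
  rw [side, Sym2.eq_swap]

lemma Walk.reachable_deleteEdges_of_notMem_support {e : Sym2 V} (p : G.Walk x y)
    (hd : d ∉ p.support) (he : d ∈ e) : (G.deleteEdges {e}).Reachable x y := by
  induction e using Sym2.ind with
  | _ c c' =>
    refine reachable_deleteEdges_iff_exists_walk.2 ⟨p, fun hp => hd ?_⟩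
    rcases Sym2.mem_iff.1 he with rfl | rfl
    exacts [p.fst_mem_support_of_mem_edges hp, p.snd_mem_support_of_mem_edges hp]

lemma IsAcyclic.not_reachable_deleteEdges (hG : G.IsAcyclic) (h : G.Adj u v) :
    ¬(G.deleteEdges {s(u, v)}).Reachable u v :=
  isBridge_iff.1 (isAcyclic_iff_forall_adj_isBridge.1 hG h)

lemma Connected.side_union_side (hG : G.Connected) : G.side u v ∪ G.side v u = univ := by
  refine eq_univ_of_forall fun x => ?_
  obtain ⟨p, hp⟩ := (hG.preconnected u x).exists_isPath
  cases p with
  | nil => exact .inl (Reachable.refl _)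
  | @cons _ y _ h q =>
    have hu : u ∉ q.support := (Walk.cons_isPath_iff h q).1 hp |>.2
    by_cases hyv : y = v
    · subst hyv
      rw [side, Sym2.eq_swap]
      exact .inr (q.reachable_deleteEdges_of_notMem_support hu (Sym2.mem_mk_right _ _))
    · have had : (G.deleteEdges {s(u, v)}).Adj u y := by
        simp only [deleteEdges_adj, mem_singleton_iff, Sym2.congr_right]
        exact ⟨h, hyv⟩
      exact .inl (had.reachable.trans
        (q.reachable_deleteEdges_of_notMem_support hu (Sym2.mem_mk_left _ _)))

lemma disjoint_side_side (h : ¬(G.deleteEdges {s(u, v)}).Reachable u v) :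
    Disjoint (G.side u v) (G.side v u) := by
  refine Set.disjoint_left.2 fun x hu hv => h (hu.trans ?_)
  rw [side, Sym2.eq_swap] at hv
  exact hv.symm

lemma Connected.exists_adj_mem_side (hG : G.Connected) (hxw : x ≠ w) :
    ∃ u, G.Adj u w ∧ x ∈ G.side u w := by
  obtain ⟨p, hp⟩ := (hG.preconnected w x).exists_isPath
  cases p with
  | nil => exact absurd rfl hxw
  | @cons _ u _ h q =>
    exact ⟨u, h.symm, q.reachable_deleteEdges_of_notMem_support
      ((Walk.cons_isPath_iff h q).1 hp).2 (Sym2.mem_mk_right _ _)⟩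

lemma side_subset_side (hca : a ∈ G.side c d) (hd : d ∉ G.side a b) :
    G.side a b ⊆ G.side c d := by
  classical
  rintro x ⟨p⟩
  have hdp : d ∉ (p.mapLe (G.deleteEdges_le _)).support := by
    rw [Walk.support_mapLe_eq_support]
    exact fun h => hd ⟨p.takeUntil d h⟩
  exact hca.trans ((p.mapLe _).reachable_deleteEdges_of_notMem_support hdp (Sym2.mem_mk_right _ _))

lemma Walk.reachable_induce_of_support_subset {s : Set V} (p : G.Walk x y)
    (hp : ∀ z ∈ p.support, z ∈ s) :
    (G.induce s).Reachable ⟨x, hp x p.start_mem_support⟩ ⟨y, hp y p.end_mem_support⟩ :=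
  (p.connected_induce_support.preconnected ⟨x, p.start_mem_support⟩
    ⟨y, p.end_mem_support⟩).map (induceHomOfLE G hp).toHom

lemma side_eq_image_supp (h : G.Adj u w) (hb : ¬(G.deleteEdges {s(u, w)}).Reachable u w) :
    G.side u w =
      Subtype.val '' ((G.induce {w}ᶜ).connectedComponentMk ⟨u, h.ne⟩).supp := by
  classical
  ext x
  constructor
  · rintro ⟨p⟩
    have hp : ∀ z ∈ (p.mapLe (G.deleteEdges_le _)).support, z ∈ ({w}ᶜ : Set V) := by
      rw [Walk.support_mapLe_eq_support]
      rintro z hz rfl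
      exact hb ⟨p.takeUntil z hz⟩
    refine ⟨⟨x, hp x (Walk.end_mem_support _)⟩, ?_, rfl⟩
    rw [ConnectedComponent.mem_supp_iff]
    exact ConnectedComponent.sound ((p.mapLe _).reachable_induce_of_support_subset hp).symm
  · rintro ⟨x, hx, rfl⟩
    rw [ConnectedComponent.mem_supp_iff, ConnectedComponent.eq] at hx
    obtain ⟨q⟩ := hx.symm
    refine (q.map (Embedding.induce _).toHom).reachable_deleteEdges_of_notMem_support
      (d := w) ?_ (Sym2.mem_mk_right _ _)
    simp only [Walk.support_map, List.mem_map, not_exists, not_and]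
    exact fun z _ hz => z.2 hz

lemma IsTree.exists_forall_adj_not [Fintype V] {R : V → V → Prop} (hT : G.IsTree)
    (hR : ∀ u v, G.Adj u v → R u v → ¬R v u) : ∃ w, ∀ u, G.Adj w u → ¬R w u := by
  classical
  by_contra! h
  choose f hadj hf using h
  have hcard : (Finset.univ : Finset V).card ≤ G.edgeFinset.card := by
    refine Finset.card_le_card_of_injOn (fun w => s(w, f w))
      (fun w _ => mem_edgeFinset.2 (hadj w)) fun w _ w' _ he => ?_
    rcases Sym2.eq_iff.1 he with ⟨hw, -⟩ | ⟨hw, hw'⟩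
    · exact hw
    · exact (hR _ _ (hadj w) (hf w) (hw' ▸ hw ▸ hf w')).elim
  have hedges := hT.card_edgeFinset
  rw [Finset.card_univ] at hcard
  omega

lemma IsTree.forall_connectedComponent_iff {P : Set V → Prop} (hT : G.IsTree) :
    (∀ c : (G.induce {w}ᶜ).ConnectedComponent, P (Subtype.val '' c.supp)) ↔
      ∀ u, G.Adj u w → P (G.side u w) := by
  have hb := fun u (h : G.Adj u w) => hT.isAcyclic.not_reachable_deleteEdges h
  refine ⟨fun hc u h => side_eq_image_supp h (hb u h) ▸ hc _, fun hs c => ?_⟩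
  induction c using ConnectedComponent.ind with | h x =>
  obtain ⟨u, h, hx⟩ := hT.connected.exists_adj_mem_side x.2
  rw [side_eq_image_supp h (hb u h)] at hx
  obtain ⟨x', hx', hxx'⟩ := hx
  obtain rfl : x' = x := Subtype.val_injective hxx'
  rw [ConnectedComponent.mem_supp_iff] at hx'
  rw [hx', ← side_eq_image_supp h (hb u h)]
  exact hs u h

lemma IsTree.eq_of_forall_adj_side {P : Set V → Prop} (hT : G.IsTree) (hP : Antitone P)
    (hside : ∀ u v, G.Adj u v → P (G.side u v) → ¬P (G.side v u))
    (hy : ∀ u, G.Adj u y → P (G.side u y)) (hw : ∀ u, G.Adj u w → P (G.side u w)) : y = w := by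
  by_contra hyw
  obtain ⟨u, huy, hwu⟩ := hT.connected.exists_adj_mem_side (Ne.symm hyw)
  obtain ⟨w', hw'w, hyw'⟩ := hT.connected.exists_adj_mem_side hyw
  have hw_not : w ∉ G.side y u :=
    (disjoint_side_side (hT.isAcyclic.not_reachable_deleteEdges huy)).notMem_of_mem_left hwu
  exact hside u y huy (hy u huy) (hP (side_subset_side hyw' hw_not) (hw w' hw'w))

end SimpleGraph

open SimpleGraph

theorem stmt_4_general {V : Type*} [Fintype V] (G : SimpleGraph V)
    (hT : G.IsTree) (X A B : Set V)
    (hAne : A.Nonempty) (hBne : B.Nonempty) (hdisj : A ∩ B = ∅) (hunion : A ∪ B = X)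
    (hnosplit : ∀ u v : V, G.Adj u v →
      ¬ ((X ∩ {x | (G.deleteEdges {s(u, v)}).Reachable u x} = A ∧
          X ∩ {x | (G.deleteEdges {s(u, v)}).Reachable v x} = B) ∨
         (X ∩ {x | (G.deleteEdges {s(u, v)}).Reachable u x} = B ∧
          X ∩ {x | (G.deleteEdges {s(u, v)}).Reachable v x} = A)))
    (hcompat : ∀ u v : V, G.Adj u v →
      (X ∩ {x | (G.deleteEdges {s(u, v)}).Reachable u x}) ∩ A = ∅ ∨
      (X ∩ {x | (G.deleteEdges {s(u, v)}).Reachable u x}) ∩ B = ∅ ∨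
      (X ∩ {x | (G.deleteEdges {s(u, v)}).Reachable v x}) ∩ A = ∅ ∨
      (X ∩ {x | (G.deleteEdges {s(u, v)}).Reachable v x}) ∩ B = ∅) :
    ∃! w : V, ∀ c : (G.induce ({w}ᶜ : Set V)).ConnectedComponent,
      X ∩ (Subtype.val '' c.supp) ⊆ A ∨ X ∩ (Subtype.val '' c.supp) ⊆ B := by
  set P : Set V → Prop := fun S => IsMonochromatic A B (X ∩ S)
  have hP : Antitone P := fun _ _ hST => IsMonochromatic.mono (inter_subset_inter_right X hST)
  have hone : ∀ u v, G.Adj u v → P (G.side u v) ∨ P (G.side v u) := by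
    intro u v h
    have hc := hcompat u v h
    rw [setOf_reachable_deleteEdges_eq_side] at hc
    exact isMonochromatic_or_of_compatible hunion.ge hc
  have hboth : ∀ u v, G.Adj u v → P (G.side u v) → ¬P (G.side v u) := by
    intro u v h
    have hs := hnosplit u v h
    rw [setOf_reachable_deleteEdges_eq_side] at hs
    exact fun hu hv => not_isMonochromatic_and hAne hBne (disjoint_iff_inter_eq_empty.2 hdisj)
      hunion hT.connected.side_union_side hs ⟨hu, hv⟩
  obtain ⟨w, hw⟩ := hT.exists_forall_adj_not hboth
  have hsink : ∀ u, G.Adj u w → P (G.side u w) := fun u h =>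
    (hone w u h.symm).resolve_left (hw u h.symm)
  refine ⟨w, hT.forall_connectedComponent_iff.2 hsink, fun y hy => ?_⟩
  exact hT.eq_of_forall_adj_side hP hboth (hT.forall_connectedComponent_iff.1 hy) hsink

/-- Let `T` be a finite tree, `X` a set of vertices containing every leaf, and `{A, B}` a
partition of `X` into two nonempty sets such that no edge of `T` induces the `X`-split
`{A, B}` and the `X`-split induced by every edge of `T` is compatible with `{A, B}`.
(The `X`-split induced by an edge `s(u, v)` is the unordered pair
`{X ∩ Wᵤ, X ∩ Wᵥ}` where `Wᵤ`, `Wᵥ` are the vertex sets of the two connected components of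
`T` with that edge deleted, i.e. the vertices reachable from `u` resp. `v`; two unordered
pairs are compatible when one of the four pairwise intersections is empty.)
Then there is a unique vertex `w` such that for every connected component `W` of `T` with
`w` deleted, either `X ∩ W ⊆ A` or `X ∩ W ⊆ B`. -/
theorem stmt_4 {V : Type*} [Fintype V] [DecidableEq V] (G : SimpleGraph V)
    [DecidableRel G.Adj] (hT : G.IsTree) (X A B : Set V)
    (hleaf : ∀ v : V, G.degree v = 1 → v ∈ X)
    (hAne : A.Nonempty) (hBne : B.Nonempty) (hdisj : A ∩ B = ∅) (hunion : A ∪ B = X)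
    (hnosplit : ∀ u v : V, G.Adj u v →
      ¬ ((X ∩ {x | (G.deleteEdges {s(u, v)}).Reachable u x} = A ∧
          X ∩ {x | (G.deleteEdges {s(u, v)}).Reachable v x} = B) ∨
         (X ∩ {x | (G.deleteEdges {s(u, v)}).Reachable u x} = B ∧
          X ∩ {x | (G.deleteEdges {s(u, v)}).Reachable v x} = A)))
    (hcompat : ∀ u v : V, G.Adj u v →
      (X ∩ {x | (G.deleteEdges {s(u, v)}).Reachable u x}) ∩ A = ∅ ∨
      (X ∩ {x | (G.deleteEdges {s(u, v)}).Reachable u x}) ∩ B = ∅ ∨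
      (X ∩ {x | (G.deleteEdges {s(u, v)}).Reachable v x}) ∩ A = ∅ ∨
      (X ∩ {x | (G.deleteEdges {s(u, v)}).Reachable v x}) ∩ B = ∅) :
    ∃! w : V, ∀ c : (G.induce ({w}ᶜ : Set V)).ConnectedComponent,
      X ∩ (Subtype.val '' c.supp) ⊆ A ∨ X ∩ (Subtype.val '' c.supp) ⊆ B :=
  stmt_4_general G hT X A B hAne hBne hdisj hunion hnosplit hcompat
end

section
/- Let T be a finite tree with vertex set V, let X ⊆ V contain every leaf of T, and let {A, B} be a partition of X into two nonempty sets such that: (i) no edge of T induces the X-split {A, B}; and (ii) for every edge e of T, the X-split induced by e is compatible with {A, B}. Then for every edge e of T, with W and W′ the vertex sets of the two connected components of T with e deleted, exactly one of W, W′ satisfies: X ∩ · is nonempty and is contained in A or contained in B. -/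
/-!
Each side of an edge `uv` of a finite tree contains a leaf: if `u` is not a leaf it has a
neighbour `w ≠ v`, and the side of `w` away from `u` is strictly smaller than the side of `u`
away from `v`. As `X` contains the leaves, both `X`-sides of every edge are nonempty, and they
cover `X`. Compatibility puts one side inside `A` or inside `B`; if both sides were, then either
`{A, B}` would be the split of the edge or one of `A`, `B` would be empty.
-/

namespace SimpleGraph

variable {V : Type*} {G : SimpleGraph V} {u v w x : V}

lemma IsAcyclic.not_reachable_deleteEdge (hG : G.IsAcyclic) (huv : G.Adj u v) :
    ¬ (G.deleteEdges {s(u, v)}).Reachable u v :=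
  isBridge_iff.mp (isAcyclic_iff_forall_adj_isBridge.mp hG huv)

lemma Reachable.reachable_deleteEdge_or (h : G.Reachable u x) (v : V) :
    (G.deleteEdges {s(u, v)}).Reachable u x ∨ (G.deleteEdges {s(u, v)}).Reachable v x := by
  rw [reachable_iff_reflTransGen] at h
  induction h with
  | refl => exact .inl .rfl
  | @tail y z _ hyz ih =>
    by_cases he : s(y, z) = s(u, v)
    · rcases Sym2.eq_iff.mp he with ⟨-, rfl⟩ | ⟨-, rfl⟩
      · exact .inr .rfl
      · exact .inl .rfl
    · have hyz' : (G.deleteEdges {s(u, v)}).Adj y z := deleteEdges_adj.mpr ⟨hyz, he⟩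
      exact ih.imp (·.trans hyz'.reachable) (·.trans hyz'.reachable)

lemma IsAcyclic.reachable_deleteEdge_ssubset (hG : G.IsAcyclic) (huv : G.Adj u v)
    (huw : G.Adj u w) (hwv : w ≠ v) :
    {x | (G.deleteEdges {s(w, u)}).Reachable w x} ⊂
      {x | (G.deleteEdges {s(u, v)}).Reachable u x} := by
  classical
  have hwu := hG.not_reachable_deleteEdge huw.symm
  refine Set.ssubset_iff_of_subset (fun x hx ↦ ?_) |>.mpr ⟨u, .rfl, hwu⟩
  obtain ⟨p, hp⟩ := reachable_deleteEdges_iff_exists_walk.mp hx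
  refine reachable_deleteEdges_iff_exists_walk.mpr ⟨.cons huw p, ?_⟩
  rw [Walk.edges_cons, List.mem_cons, not_or]
  refine ⟨fun h ↦ hwv ?_, fun h ↦ hwu ?_⟩
  · rcases Sym2.eq_iff.mp h with ⟨-, h⟩ | ⟨-, h⟩
    exacts [h.symm, absurd h.symm huv.ne]
  · have hu := p.fst_mem_support_of_mem_edges h
    exact reachable_deleteEdges_iff_exists_walk.mpr
      ⟨p.takeUntil u hu, fun h' ↦ hp (p.edges_takeUntil_subset_edges hu h')⟩

lemma IsAcyclic.exists_degree_eq_one_reachable_deleteEdge [Finite V] [G.LocallyFinite]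
    (hG : G.IsAcyclic) (huv : G.Adj u v) :
    ∃ w, G.degree w = 1 ∧ (G.deleteEdges {s(u, v)}).Reachable u w := by
  induction hS : {x | (G.deleteEdges {s(u, v)}).Reachable u x} using WellFoundedLT.induction
    generalizing u v with | ind S ih =>
  subst hS
  by_cases hu : G.degree u = 1
  · exact ⟨u, hu, .rfl⟩
  obtain ⟨w, huw, hwv⟩ : ∃ w, G.Adj u w ∧ w ≠ v := by
    by_contra! h
    exact hu (degree_eq_one_iff_existsUnique_adj.mpr ⟨v, huv, h⟩)
  have hlt := hG.reachable_deleteEdge_ssubset huv huw hwv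
  obtain ⟨x, hx, hwx⟩ := ih _ hlt huw.symm rfl
  exact ⟨x, hx, hlt.subset hwx⟩

end SimpleGraph

namespace Set
variable {α : Type*} {X A B P Q : Set α}

lemma subset_or_subset_of_inter_eq_empty (hX : A ∪ B = X) (hP : P ⊆ X)
    (h : P ∩ A = ∅ ∨ P ∩ B = ∅) : P ⊆ A ∨ P ⊆ B := by
  rw [← disjoint_iff_inter_eq_empty, ← disjoint_iff_inter_eq_empty] at h
  rw [← hX] at hP
  exact h.symm.imp (Disjoint.subset_left_of_subset_union hP)
    (Disjoint.subset_right_of_subset_union hP)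

lemma eq_and_eq_of_union_eq_union (hAB : Disjoint A B) (h : P ∪ Q = A ∪ B) (hPA : P ⊆ A)
    (hQB : Q ⊆ B) : P = A ∧ Q = B :=
  ⟨hPA.antisymm <| Disjoint.subset_left_of_subset_union (h ▸ subset_union_left)
      (hAB.mono_right hQB),
    hQB.antisymm <| Disjoint.subset_right_of_subset_union (h ▸ subset_union_right)
      (hAB.symm.mono_right hPA)⟩

lemma xor_subset_of_compatible (hA : A.Nonempty) (hB : B.Nonempty) (hAB : A ∩ B = ∅)
    (hX : A ∪ B = X) (hPQ : P ∪ Q = X) (hPne : P.Nonempty) (hQne : Q.Nonempty)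
    (hsplit : ¬ ((P = A ∧ Q = B) ∨ (P = B ∧ Q = A)))
    (hcompat : P ∩ A = ∅ ∨ P ∩ B = ∅ ∨ Q ∩ A = ∅ ∨ Q ∩ B = ∅) :
    Xor (P.Nonempty ∧ (P ⊆ A ∨ P ⊆ B)) (Q.Nonempty ∧ (Q ⊆ A ∨ Q ⊆ B)) := by
  rw [← disjoint_iff_inter_eq_empty] at hAB
  have hPQAB : P ∪ Q = A ∪ B := hPQ.trans hX.symm
  have hAPQ : A ⊆ P ∪ Q := hPQAB ▸ subset_union_left
  have hBPQ : B ⊆ P ∪ Q := hPQAB ▸ subset_union_right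
  have hnot : ¬ ((P ⊆ A ∨ P ⊆ B) ∧ (Q ⊆ A ∨ Q ⊆ B)) := by
    rintro ⟨hPA | hPB, hQA | hQB⟩
    · exact hB.ne_empty (hAB.eq_bot_of_ge (hBPQ.trans (union_subset hPA hQA)))
    · exact hsplit (.inl (eq_and_eq_of_union_eq_union hAB hPQAB hPA hQB))
    · exact hsplit (.inr (eq_and_eq_of_union_eq_union hAB.symm (union_comm A B ▸ hPQAB) hPB hQA))
    · exact hA.ne_empty (hAB.eq_bot_of_le (hAPQ.trans (union_subset hPB hQB)))
  have hP : P ⊆ X := hPQ ▸ subset_union_left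
  have hQ : Q ⊆ X := hPQ ▸ subset_union_right
  rw [← or_assoc] at hcompat
  rcases hcompat with hc | hc
  · have hPc := subset_or_subset_of_inter_eq_empty hX hP hc
    exact .inl ⟨⟨hPne, hPc⟩, fun hQc ↦ hnot ⟨hPc, hQc.2⟩⟩
  · have hQc := subset_or_subset_of_inter_eq_empty hX hQ hc
    exact .inr ⟨⟨hQne, hQc⟩, fun hPc ↦ hnot ⟨hPc.2, hQc⟩⟩

end Set

theorem stmt_5_general {V : Type*} [Fintype V] (G : SimpleGraph V)
    [DecidableRel G.Adj] (hT : G.IsTree) (X A B : Set V)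
    (hleaf : ∀ v : V, G.degree v = 1 → v ∈ X)
    (hAne : A.Nonempty) (hBne : B.Nonempty) (hdisj : A ∩ B = ∅) (hunion : A ∪ B = X)
    (hnosplit : ∀ u v : V, G.Adj u v →
      ¬ ((X ∩ {x | (G.deleteEdges {s(u, v)}).Reachable u x} = A ∧
          X ∩ {x | (G.deleteEdges {s(u, v)}).Reachable v x} = B) ∨
         (X ∩ {x | (G.deleteEdges {s(u, v)}).Reachable u x} = B ∧
          X ∩ {x | (G.deleteEdges {s(u, v)}).Reachable v x} = A)))
    (hcompat : ∀ u v : V, G.Adj u v →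
      (X ∩ {x | (G.deleteEdges {s(u, v)}).Reachable u x}) ∩ A = ∅ ∨
      (X ∩ {x | (G.deleteEdges {s(u, v)}).Reachable u x}) ∩ B = ∅ ∨
      (X ∩ {x | (G.deleteEdges {s(u, v)}).Reachable v x}) ∩ A = ∅ ∨
      (X ∩ {x | (G.deleteEdges {s(u, v)}).Reachable v x}) ∩ B = ∅) :
    ∀ u v : V, G.Adj u v →
      Xor'
        ((X ∩ {x | (G.deleteEdges {s(u, v)}).Reachable u x}).Nonempty ∧
          (X ∩ {x | (G.deleteEdges {s(u, v)}).Reachable u x} ⊆ A ∨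
           X ∩ {x | (G.deleteEdges {s(u, v)}).Reachable u x} ⊆ B))
        ((X ∩ {x | (G.deleteEdges {s(u, v)}).Reachable v x}).Nonempty ∧
          (X ∩ {x | (G.deleteEdges {s(u, v)}).Reachable v x} ⊆ A ∨
           X ∩ {x | (G.deleteEdges {s(u, v)}).Reachable v x} ⊆ B)) := by
  intro u v huv
  obtain ⟨a, ha, hua⟩ := hT.isAcyclic.exists_degree_eq_one_reachable_deleteEdge huv
  obtain ⟨b, hb, hvb⟩ := hT.isAcyclic.exists_degree_eq_one_reachable_deleteEdge huv.symm
  rw [Sym2.eq_swap] at hvb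
  refine Set.xor_subset_of_compatible hAne hBne hdisj hunion ?_ ⟨a, hleaf a ha, hua⟩
    ⟨b, hleaf b hb, hvb⟩ (hnosplit u v huv) (hcompat u v huv)
  rw [← Set.inter_union_distrib_left, Set.inter_eq_left]
  exact fun x _ ↦ (hT.connected.preconnected u x).reachable_deleteEdge_or v

/-- Let `T` be a finite tree, `X` a set of vertices containing every leaf, and `{A, B}` a
partition of `X` into two nonempty sets such that no edge of `T` induces the `X`-split
`{A, B}` and the `X`-split induced by every edge of `T` is compatible with `{A, B}`.
Then for every edge of `T`, with `Wᵤ` and `Wᵥ` the vertex sets of the two connected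
components of `T` with that edge deleted (the vertices reachable from its endpoints `u`
resp. `v`), exactly one of `Wᵤ`, `Wᵥ` satisfies: `X ∩ ·` is nonempty and is contained in
`A` or contained in `B`. -/
theorem stmt_5 {V : Type*} [Fintype V] [DecidableEq V] (G : SimpleGraph V)
    [DecidableRel G.Adj] (hT : G.IsTree) (X A B : Set V)
    (hleaf : ∀ v : V, G.degree v = 1 → v ∈ X)
    (hAne : A.Nonempty) (hBne : B.Nonempty) (hdisj : A ∩ B = ∅) (hunion : A ∪ B = X)
    (hnosplit : ∀ u v : V, G.Adj u v →
      ¬ ((X ∩ {x | (G.deleteEdges {s(u, v)}).Reachable u x} = A ∧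
          X ∩ {x | (G.deleteEdges {s(u, v)}).Reachable v x} = B) ∨
         (X ∩ {x | (G.deleteEdges {s(u, v)}).Reachable u x} = B ∧
          X ∩ {x | (G.deleteEdges {s(u, v)}).Reachable v x} = A)))
    (hcompat : ∀ u v : V, G.Adj u v →
      (X ∩ {x | (G.deleteEdges {s(u, v)}).Reachable u x}) ∩ A = ∅ ∨
      (X ∩ {x | (G.deleteEdges {s(u, v)}).Reachable u x}) ∩ B = ∅ ∨
      (X ∩ {x | (G.deleteEdges {s(u, v)}).Reachable v x}) ∩ A = ∅ ∨
      (X ∩ {x | (G.deleteEdges {s(u, v)}).Reachable v x}) ∩ B = ∅) :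
    ∀ u v : V, G.Adj u v →
      Xor'
        ((X ∩ {x | (G.deleteEdges {s(u, v)}).Reachable u x}).Nonempty ∧
          (X ∩ {x | (G.deleteEdges {s(u, v)}).Reachable u x} ⊆ A ∨
           X ∩ {x | (G.deleteEdges {s(u, v)}).Reachable u x} ⊆ B))
        ((X ∩ {x | (G.deleteEdges {s(u, v)}).Reachable v x}).Nonempty ∧
          (X ∩ {x | (G.deleteEdges {s(u, v)}).Reachable v x} ⊆ A ∨
           X ∩ {x | (G.deleteEdges {s(u, v)}).Reachable v x} ⊆ B)) :=
  stmt_5_general G hT X A B hleaf hAne hBne hdisj hunion hnosplit hcompat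
end
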